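/- Let k and n be positive integers. If the stacked path R_{(n-1)·k⁴ + 1} has a k-lettering, then the stacked path R_n has a 4-lettering in which all of the vertices s(i,1) for 1 ≤ i ≤ n are encoded by the same letter, all of the vertices c(i,1) for 1 ≤ i ≤ n are encoded by the same letter, all of the vertices c(i,2) for 1 ≤ i ≤ n are encoded by the same letter, and all of the vertices s(i,2) for 1 ≤ i ≤ n are encoded by the same letter. -/

import Mathlib

/-- A `k`-lettering of a graph `G`: a decoder `D ⊆ Fin k × Fin k`, a letter
assignment `L`, and an injective ordering `ord` such that for `ord u < ord v`,
`u` and `v` are adjacent iff `(L u, L v) ∈ D`. -/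
def HasLettering {V : Type*} (G : SimpleGraph V) (k : ℕ) : Prop :=
  ∃ (D : Set (Fin k × Fin k)) (L : V → Fin k) (ord : V → ℕ),
    Function.Injective ord ∧
    ∀ u v : V, u ≠ v → ord u < ord v → (G.Adj u v ↔ (L u, L v) ∈ D)

/-- The lettericity of a graph: the least `k` such that it has a `k`-lettering. -/
noncomputable def lettericity {V : Type*} (G : SimpleGraph V) : ℕ :=
  sInf {k | HasLettering G k}

/-- The stacked path `Rₙ`: `Sum.inl (i, j)` is the clique vertex `c(i+1, j+1)` and
`Sum.inr (i, j)` is the independent-set vertex `s(i+1, j+1)`; the `c`-vertices form a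
clique, the `s`-vertices form an independent set, and `s(u₁,v₁) ~ c(u₂,v₂)` iff
`u₁ > u₂` or (`u₁ = u₂` and `v₁ = v₂`). -/
def stackedPath (n : ℕ) : SimpleGraph ((Fin n × Fin 2) ⊕ (Fin n × Fin 2)) where
  Adj a b :=
    match a, b with
    | Sum.inl c₁, Sum.inl c₂ => c₁ ≠ c₂
    | Sum.inl c, Sum.inr s => c.1 < s.1 ∨ (s.1 = c.1 ∧ s.2 = c.2)
    | Sum.inr s, Sum.inl c => c.1 < s.1 ∨ (s.1 = c.1 ∧ s.2 = c.2)
    | Sum.inr _, Sum.inr _ => False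
  symm := ⟨by rintro (a | a) (b | b) h <;> first | exact h.symm | exact h⟩
  loopless := by
    constructor
    rintro (a | a) h
    · exact h rfl
    · exact h

/-!
By pigeonhole on the quadruple of letters `(L s(i,1), L c(i,1), L c(i,2), L s(i,2))`, some
`n` of the `(n-1)k⁴+1` levels of the large stacked path carry the same quadruple. These
levels span a copy of `Rₙ`, and a lettering restricts to induced subgraphs; on the copy the
letter of a vertex depends only on its type, so it factors through a `4`-letter alphabet.
-/

def IsLettering {V α : Type*} (G : SimpleGraph V) (D : Set (α × α)) (L : V → α)
    (ord : V → ℕ) : Prop :=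
  Function.Injective ord ∧ ∀ u v, u ≠ v → ord u < ord v → (G.Adj u v ↔ (L u, L v) ∈ D)

namespace IsLettering

variable {V W α β : Type*} {G : SimpleGraph V} {H : SimpleGraph W}

theorem comap {D : Set (α × α)} {L : W → α} {ord : W → ℕ} (hL : IsLettering H D L ord)
    (f : G ↪g H) : IsLettering G D (L ∘ f) (ord ∘ f) := by
  refine ⟨hL.1.comp f.injective, fun u v huv hlt => ?_⟩
  rw [← f.map_adj_iff]
  exact hL.2 (f u) (f v) (f.injective.ne huv) hlt

theorem of_comp {D : Set (α × α)} {φ : β → α} {L : V → β} {ord : V → ℕ}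
    (hL : IsLettering G D (φ ∘ L) ord) : IsLettering G (Prod.map φ φ ⁻¹' D) L ord :=
  hL

end IsLettering

theorem exists_orderEmbedding_fin_forall_eq {α β : Type*} [Fintype α] [LinearOrder α]
    [Fintype β] (f : α → β) {n : ℕ} (h : Fintype.card β * (n - 1) < Fintype.card α) :
    ∃ (g : Fin n ↪o α) (b : β), ∀ i, f (g i) = b := by
  classical
  obtain ⟨b, hb⟩ := Fintype.exists_lt_card_fiber_of_mul_lt_card f h
  obtain ⟨S, hS, rfl⟩ := Finset.exists_subset_card_eq (s := {x | f x = b}) (n := n) (by omega)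
  exact ⟨S.orderEmbOfFin rfl, b, fun i => by simpa using hS (S.orderEmbOfFin_mem rfl i)⟩

namespace stackedPath

def embedding {n m : ℕ} (g : Fin n ↪o Fin m) : stackedPath n ↪g stackedPath m where
  toFun := Sum.map (Prod.map g id) (Prod.map g id)
  inj' :=
    (g.injective.prodMap Function.injective_id).sumMap (g.injective.prodMap Function.injective_id)
  map_rel_iff' := by
    rintro (⟨i, j⟩ | ⟨i, j⟩) (⟨i', j'⟩ | ⟨i', j'⟩) <;>
      simp [stackedPath, g.lt_iff_lt, g.injective.eq_iff]

def typeLetter {n : ℕ} : (Fin n × Fin 2) ⊕ (Fin n × Fin 2) → Fin 4 :=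
  Sum.elim (fun c => ![1, 2] c.2) (fun s => ![0, 3] s.2)

end stackedPath

theorem stackedPath_uniform_lettering_general (k n : ℕ)
    (h : HasLettering (stackedPath ((n - 1) * k ^ 4 + 1)) k) :
    ∃ (D : Set (Fin 4 × Fin 4)) (L : (Fin n × Fin 2) ⊕ (Fin n × Fin 2) → Fin 4)
      (ord : (Fin n × Fin 2) ⊕ (Fin n × Fin 2) → ℕ),
      Function.Injective ord ∧
      (∀ u v, u ≠ v → ord u < ord v → ((stackedPath n).Adj u v ↔ (L u, L v) ∈ D)) ∧
      (∀ i i' : Fin n, L (Sum.inr (i, 0)) = L (Sum.inr (i', 0))) ∧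
      (∀ i i' : Fin n, L (Sum.inl (i, 0)) = L (Sum.inl (i', 0))) ∧
      (∀ i i' : Fin n, L (Sum.inl (i, 1)) = L (Sum.inl (i', 1))) ∧
      (∀ i i' : Fin n, L (Sum.inr (i, 1)) = L (Sum.inr (i', 1))) := by
  obtain ⟨D, L, ord, hL⟩ := h
  obtain ⟨g, ⟨t₀, t₁, t₂, t₃⟩, hg⟩ := exists_orderEmbedding_fin_forall_eq
    (fun i => (L (.inr (i, 0)), L (.inl (i, 0)), L (.inl (i, 1)), L (.inr (i, 1))))
    (n := n) (by simp; nlinarith)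
  have hfactor :
      L ∘ stackedPath.embedding g = ![t₀, t₁, t₂, t₃] ∘ stackedPath.typeLetter := by
    simp only [Prod.mk.injEq] at hg
    funext v
    obtain ⟨i, j⟩ | ⟨i, j⟩ := v <;> fin_cases j <;>
      simp [stackedPath.embedding, stackedPath.typeLetter, hg i]
  have hR : IsLettering (stackedPath n) _ stackedPath.typeLetter _ :=
    (hfactor ▸ (IsLettering.comap hL (stackedPath.embedding g))).of_comp
  exact ⟨_, _, _, hR.1, hR.2, fun _ _ => rfl, fun _ _ => rfl, fun _ _ => rfl, fun _ _ => rfl⟩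

/-- If the stacked path `R_{(n-1)k⁴+1}` has a `k`-lettering, then `Rₙ` has a
`4`-lettering in which all the vertices `s(i,1)` get a common letter, all the
`c(i,1)` get a common letter, all the `c(i,2)` get a common letter, and all the
`s(i,2)` get a common letter. -/
theorem stackedPath_uniform_lettering (k n : ℕ) (hk : 0 < k) (hn : 0 < n)
    (h : HasLettering (stackedPath ((n - 1) * k ^ 4 + 1)) k) :
    ∃ (D : Set (Fin 4 × Fin 4)) (L : (Fin n × Fin 2) ⊕ (Fin n × Fin 2) → Fin 4)
      (ord : (Fin n × Fin 2) ⊕ (Fin n × Fin 2) → ℕ),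
      Function.Injective ord ∧
      (∀ u v, u ≠ v → ord u < ord v → ((stackedPath n).Adj u v ↔ (L u, L v) ∈ D)) ∧
      (∀ i i' : Fin n, L (Sum.inr (i, 0)) = L (Sum.inr (i', 0))) ∧
      (∀ i i' : Fin n, L (Sum.inl (i, 0)) = L (Sum.inl (i', 0))) ∧
      (∀ i i' : Fin n, L (Sum.inl (i, 1)) = L (Sum.inl (i', 1))) ∧
      (∀ i i' : Fin n, L (Sum.inr (i, 1)) = L (Sum.inr (i', 1))) :=
  stackedPath_uniform_lettering_general k n h
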